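/- arXiv:2504.19152 — 2 statements merged into one kernel-verified Lean document; each statement's English description precedes it below -/
import Mathlib

section
/- Let A be a strongly connected NFA with m states and period λ. For every i ∈ ℤ/λℤ, the set of minimal blocking factors of A of the form (i:u) is a regular language over the alphabet ℤ/λℤ × Σ; moreover, it is recognized by an NFA whose number of states is at most 2^{Cm} for some constant C independent of A and m. -/
open scoped ENNReal

structure NFA' (Q : Type) (A : Type) where
  step : Q → A → Set Q
  init : Q
  final : Set Q

namespace NFA'

variable {Q A : Type}

inductive Run (M : NFA' Q A) : Q → List A → Q → Prop
  | nil (q : Q) : Run M q [] q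
  | cons {p q r : Q} {a : A} {w : List A} :
      q ∈ M.step p a → Run M q w r → Run M p (a :: w) r

def lang (M : NFA' Q A) : Set (List A) := {w | ∃ q ∈ M.final, M.Run M.init w q}

def Reachable (M : NFA' Q A) (s t : Q) : Prop := ∃ w, M.Run s w t

def StronglyConnected (M : NFA' Q A) : Prop := ∀ s t : Q, M.Reachable s t

def Trim (M : NFA' Q A) : Prop :=
  (∀ q, M.Reachable M.init q) ∧ (∀ q, ∃ f ∈ M.final, M.Reachable q f)

def IsPeriod (M : NFA' Q A) (l : ℕ) : Prop :=
  0 < l ∧ (∀ (q : Q) (w : List A), w ≠ [] → M.Run q w q → l ∣ w.length) ∧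
    ∀ d : ℕ, (∀ (q : Q) (w : List A), w ≠ [] → M.Run q w q → d ∣ w.length) → d ∣ l

end NFA'

def posWord {A : Type} (l : ℕ) (n : ℕ) (u : List A) : List (ZMod l × A) :=
  (u.zipIdx.map Prod.swap).map fun ka => (((n + ka.1 : ℕ) : ZMod l), ka.2)

def IsPosWord {A : Type} (l : ℕ) (τ : List (ZMod l × A)) : Prop :=
  ∃ (n : ℕ) (u : List A), τ = posWord l n u

def NFA'.posLang {Q A : Type} (M : NFA' Q A) (l : ℕ) : Set (List (ZMod l × A)) :=
  {τ | ∃ u ∈ M.lang, τ = posWord l 0 u}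

def NFA'.Blocking {Q A : Type} (M : NFA' Q A) (l : ℕ) (τ : List (ZMod l × A)) : Prop :=
  IsPosWord l τ ∧ ∀ μ : List (ZMod l × A), IsPosWord l μ → τ <:+: μ → μ ∉ M.posLang l

def NFA'.MinBlocking {Q A : Type} (M : NFA' Q A) (l : ℕ) (τ : List (ZMod l × A)) : Prop :=
  M.Blocking l τ ∧ ∀ μ : List (ZMod l × A), μ <:+: τ → μ ≠ τ → ¬ M.Blocking l μ

open Classical in
noncomputable def hamming {A : Type} (u v : List A) : ℝ≥0∞ :=
  if u.length = v.length then
    (((Finset.range u.length).filter fun k => u[k]? ≠ v[k]?).card : ℝ≥0∞)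
  else ⊤

noncomputable def hammingSet {A : Type} (u : List A) (L : Set (List A)) : ℝ≥0∞ :=
  ⨅ v ∈ L, hamming u v

inductive Scattered {α : Type} : List (List α) → List α → Prop
  | nil (τ : List α) : Scattered [] τ
  | cons (pre f : List α) (fs : List (List α)) (rest : List α) :
      Scattered fs rest → Scattered (f :: fs) (pre ++ f ++ rest)

inductive NFA'.Path {Q A : Type} (M : NFA' Q A) : Q → List Q → Q → Prop
  | nil (q : Q) : NFA'.Path M q [] q
  | cons {p q r : Q} {l : List Q} (a : A) :
      q ∈ M.step p a → NFA'.Path M q l r → NFA'.Path M p (q :: l) r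

def NFA'.SimpleCycleLength {Q A : Type} (M : NFA' Q A) (n : ℕ) : Prop :=
  ∃ (q : Q) (l : List Q), l.length = n ∧ l ≠ [] ∧ l.Nodup ∧ M.Path q l q

def NFA'.IsCycleLcm {Q A : Type} (M : NFA' Q A) (p : ℕ) : Prop :=
  (∀ n, M.SimpleCycleLength n → n ∣ p) ∧
    ∀ d : ℕ, (∀ n, M.SimpleCycleLength n → n ∣ d) → p ∣ d

def NFA'.SameSCC {Q A : Type} (M : NFA' Q A) (s t : Q) : Prop :=
  M.Reachable s t ∧ M.Reachable t s

structure Portal (Q : Type) (p : ℕ) where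
  s : Q
  x : ZMod p
  t : Q
  y : ZMod p

def ValidPortal {Q A : Type} (M : NFA' Q A) {p : ℕ} (P : Portal Q p) : Prop :=
  M.SameSCC P.s P.t

def portalLang {Q A : Type} (M : NFA' Q A) {p : ℕ} (P : Portal Q p) :
    Set (List (ZMod p × A)) :=
  {τ | ∃ w : List A, M.Run P.s w P.t ∧ P.x + (w.length : ZMod p) = P.y ∧
    τ = posWord p P.x.val w}

def PortalBlocking {Q A : Type} (M : NFA' Q A) {p : ℕ} (P : Portal Q p)
    (τ : List (ZMod p × A)) : Prop :=
  ∀ μ ∈ portalLang M P, ¬ τ <:+: μ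

def IsSCCPath {Q A : Type} (M : NFA' Q A) {p : ℕ} :
    Portal Q p → List (A × Portal Q p) → Prop
  | P0, [] => ValidPortal M P0
  | P0, (a, P) :: rest =>
      ValidPortal M P0 ∧ P.x = P0.y + 1 ∧ P.s ∈ M.step P0.t a ∧
        ¬ M.Reachable P.s P0.t ∧ IsSCCPath M P rest

def sccPathLang {Q A : Type} (M : NFA' Q A) {p : ℕ} :
    Portal Q p → List (A × Portal Q p) → Set (List (ZMod p × A))
  | P0, [] => portalLang M P0
  | P0, (a, P) :: rest =>
      {τ | ∃ τ₁ τ₂, τ₁ ∈ portalLang M P0 ∧ τ₂ ∈ sccPathLang M P rest ∧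
        τ = τ₁ ++ (P0.y + 1, a) :: τ₂}

def portalsOf {Q A : Type} {p : ℕ} (P0 : Portal Q p) (steps : List (A × Portal Q p)) :
    List (Portal Q p) :=
  P0 :: steps.map Prod.snd

def lastPortal {Q A : Type} {p : ℕ} (P0 : Portal Q p) (steps : List (A × Portal Q p)) :
    Portal Q p :=
  (steps.map Prod.snd).getLastD P0

def IsAcceptingSCCPath {Q A : Type} (M : NFA' Q A) {p : ℕ} (P0 : Portal Q p)
    (steps : List (A × Portal Q p)) : Prop :=
  IsSCCPath M P0 steps ∧ P0.s = M.init ∧ P0.x = 0 ∧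
    (lastPortal P0 steps).t ∈ M.final ∧ (sccPathLang M P0 steps).Nonempty

def BlockingSeqFor {Q A : Type} (M : NFA' Q A) {p : ℕ} (σ : List (List (ZMod p × A)))
    (P0 : Portal Q p) (steps : List (A × Portal Q p)) : Prop :=
  ∃ idx : Fin (portalsOf P0 steps).length → Fin σ.length,
    Monotone idx ∧ ∀ j, PortalBlocking M ((portalsOf P0 steps).get j) (σ.get (idx j))

def StronglyBlockingSeqFor {Q A : Type} (M : NFA' Q A) {p : ℕ}
    (σ : List (List (ZMod p × A))) (P0 : Portal Q p) (steps : List (A × Portal Q p)) : Prop :=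
  ∃ idx : Fin (portalsOf P0 steps).length → Fin σ.length,
    StrictMono idx ∧ ∀ j, PortalBlocking M ((portalsOf P0 steps).get j) (σ.get (idx j))

def BlockingSeqForNFA {Q A : Type} (M : NFA' Q A) {p : ℕ}
    (σ : List (List (ZMod p × A))) : Prop :=
  ∀ (P0 : Portal Q p) (steps : List (A × Portal Q p)),
    IsAcceptingSCCPath M P0 steps → BlockingSeqFor M σ P0 steps

def SeqLE {α : Type} (σ σ' : List (List α)) : Prop :=
  ∃ idx : Fin σ.length → Fin σ'.length,
    Monotone idx ∧ ∀ j, σ.get j <:+: σ'.get (idx j)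

def MinBlockingSeq {Q A : Type} (M : NFA' Q A) {p : ℕ}
    (σ : List (List (ZMod p × A))) : Prop :=
  BlockingSeqForNFA M σ ∧
    ∀ σ' : List (List (ZMod p × A)), BlockingSeqForNFA M σ' → SeqLE σ' σ → SeqLE σ σ'

noncomputable def leftEffect {Q A : Type} (M : NFA' Q A) {p : ℕ}
    (σ : List (List (ZMod p × A))) (P0 : Portal Q p) (steps : List (A × Portal Q p)) : ℤ :=
  ((sSup {j : ℕ | ∃ i : ℕ, j = i + 1 ∧ i ≤ steps.length ∧
    BlockingSeqFor M σ P0 (steps.take i)} : ℕ) : ℤ) - 1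

-- ==================== auxiliary development ====================
namespace Stmt6Aux

variable {Q A : Type}

/-! ### Run lemmas -/

theorem run_nil_iff (M : NFA' Q A) {q r : Q} : M.Run q [] r ↔ q = r := by
  constructor
  · rintro h; cases h; rfl
  · rintro rfl; exact NFA'.Run.nil q

theorem run_cons_iff (M : NFA' Q A) {p r : Q} {a : A} {w : List A} :
    M.Run p (a :: w) r ↔ ∃ q ∈ M.step p a, M.Run q w r := by
  constructor
  · rintro h; cases h with
    | cons hstep hrun => exact ⟨_, hstep, hrun⟩
  · rintro ⟨q, hq, hrun⟩; exact NFA'.Run.cons hq hrun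

theorem run_append (M : NFA' Q A) {q r : Q} (u v : List A) :
    M.Run q (u ++ v) r ↔ ∃ s, M.Run q u s ∧ M.Run s v r := by
  induction u generalizing q with
  | nil =>
    simp only [List.nil_append]
    constructor
    · intro h; exact ⟨q, NFA'.Run.nil q, h⟩
    · rintro ⟨s, hs, h⟩; obtain rfl := (run_nil_iff M).mp hs; exact h
  | cons a u ih =>
    simp only [List.cons_append, run_cons_iff]
    constructor
    · rintro ⟨p, hp, h⟩
      obtain ⟨s, h1, h2⟩ := (ih).mp h
      exact ⟨s, ⟨p, hp, h1⟩, h2⟩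
    · rintro ⟨s, ⟨p, hp, h1⟩, h2⟩
      exact ⟨p, hp, (ih).mpr ⟨s, h1, h2⟩⟩

theorem run_singleton (M : NFA' Q A) {p r : Q} {a : A} :
    M.Run p [a] r ↔ r ∈ M.step p a := by
  rw [run_cons_iff]
  constructor
  · rintro ⟨q, hq, hrun⟩; rwa [← (run_nil_iff M).mp hrun]
  · intro h; exact ⟨r, h, NFA'.Run.nil r⟩

/-! ### posWord lemmas -/

variable {l : ℕ}

theorem pw_nil (n : ℕ) : posWord (A := A) l n [] = [] := rfl

theorem pw_enumFrom (u : List A) : ∀ n k : ℕ,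
    ((u.zipIdx k).map Prod.swap).map (fun ka => (((n + ka.1 : ℕ) : ZMod l), ka.2)) = posWord l (n + k) u := by
  induction u with
  | nil => intro n k; rfl
  | cons a u ih =>
    intro n k
    have h1 : (a :: u).zipIdx k = (a, k) :: u.zipIdx (k + 1) := rfl
    have h3 : posWord l (n + k) (a :: u) = (((n + k + 0 : ℕ) : ZMod l), a) ::
        ((u.zipIdx 1).map Prod.swap).map (fun ka => (((n + k + ka.1 : ℕ) : ZMod l), ka.2)) := by
      show (((a :: u).zipIdx 0).map Prod.swap).map _ = _
      rw [show (a :: u).zipIdx 0 = (a, 0) :: u.zipIdx 1 from rfl,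
        List.map_cons, List.map_cons]
      rfl
    rw [h1, List.map_cons, List.map_cons, ih n (k+1), h3, ih (n+k) 1]
    norm_num [Nat.add_assoc]

theorem pw_cons (n : ℕ) (a : A) (u : List A) :
    posWord l n (a :: u) = (((n : ℕ) : ZMod l), a) :: posWord l (n + 1) u := by
  show (((a :: u).zipIdx 0).map Prod.swap).map _ = _
  rw [show (a :: u).zipIdx 0 = (a, 0) :: u.zipIdx 1 from rfl,
    List.map_cons, List.map_cons, pw_enumFrom u n 1]
  norm_num

theorem pw_length (n : ℕ) (u : List A) : (posWord l n u).length = u.length := by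
  simp [posWord]

theorem pw_eq_nil_iff {n : ℕ} {u : List A} : posWord l n u = [] ↔ u = [] := by
  constructor
  · intro h
    have := pw_length (l := l) n u
    rw [h] at this
    exact List.length_eq_zero_iff.mp this.symm
  · rintro rfl; rfl

theorem pw_snd (n : ℕ) (u : List A) : (posWord l n u).map Prod.snd = u := by
  induction u generalizing n with
  | nil => rfl
  | cons a u ih => rw [pw_cons]; simp [ih]

theorem pw_congr {n n' : ℕ} (h : ((n : ℕ) : ZMod l) = ((n' : ℕ) : ZMod l)) (u : List A) :
    posWord l n u = posWord l n' u := by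
  induction u generalizing n n' with
  | nil => rfl
  | cons a u ih =>
    rw [pw_cons, pw_cons, h, ih (show (((n+1:ℕ)) : ZMod l) = (((n'+1:ℕ)) : ZMod l) by
      push_cast; rw [h])]

theorem pw_append (n : ℕ) (u v : List A) :
    posWord l n (u ++ v) = posWord l n u ++ posWord l (n + u.length) v := by
  induction u generalizing n with
  | nil => simp [pw_nil]
  | cons a u ih =>
    simp only [List.cons_append, pw_cons, ih (n+1), List.length_cons]
    rw [show n + 1 + u.length = n + (u.length + 1) by omega]

theorem pw_take (n : ℕ) (u : List A) (k : ℕ) :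
    (posWord l n u).take k = posWord l n (u.take k) := by
  induction u generalizing n k with
  | nil => simp [pw_nil]
  | cons a u ih =>
    cases k with
    | zero => simp [pw_nil]
    | succ k =>
      rw [pw_cons, List.take_succ_cons, List.take_succ_cons, pw_cons, ih (n+1) k]

theorem pw_drop (n : ℕ) (u : List A) (k : ℕ) :
    (posWord l n u).drop k = posWord l (n + k) (u.drop k) := by
  induction u generalizing n k with
  | nil => simp [pw_nil]
  | cons a u ih =>
    cases k with
    | zero => simp
    | succ k =>
      simp only [pw_cons, List.drop_succ_cons, ih (n+1) k]
      rw [show n + 1 + k = n + (k+1) by omega]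

theorem pw_dropLast (n : ℕ) (u : List A) :
    (posWord l n u).dropLast = posWord l n u.dropLast := by
  rw [List.dropLast_eq_take, List.dropLast_eq_take, pw_take, pw_length]

theorem pw_tail (n : ℕ) (u : List A) :
    (posWord l n u).tail = posWord l (n + 1) u.tail := by
  cases u with
  | nil => rfl
  | cons a u => rw [pw_cons]; rfl

theorem pw_inj_snd {n n' : ℕ} {u u' : List A} (h : posWord l n u = posWord l n' u') :
    u = u' := by
  have := congrArg (List.map Prod.snd) h
  rwa [pw_snd, pw_snd] at this

theorem pw_inj_pos {n n' : ℕ} {u u' : List A} (hu : u ≠ [])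
    (h : posWord l n u = posWord l n' u') : ((n : ℕ) : ZMod l) = ((n' : ℕ) : ZMod l) := by
  obtain ⟨a, u, rfl⟩ := List.exists_cons_of_ne_nil hu
  have hu' : u' ≠ [] := by
    rintro rfl
    exact (List.cons_ne_nil _ _) (pw_eq_nil_iff.mp h)
  obtain ⟨a', v, rfl⟩ := List.exists_cons_of_ne_nil hu'
  rw [pw_cons, pw_cons] at h
  exact congrArg Prod.fst (List.head_eq_of_cons_eq h)

theorem pw_infix (n : ℕ) (x u y : List A) :
    posWord l (n + x.length) u <:+: posWord l n (x ++ u ++ y) := by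
  rw [List.append_assoc, pw_append, pw_append]
  exact ⟨posWord l n x, posWord l (n + x.length + u.length) y, List.append_assoc _ _ _⟩

/-- decompose an infix of a positional word -/
theorem infix_pw_decomp {n : ℕ} {τ : List (ZMod l × A)} {w : List A}
    (h : τ <:+: posWord l n w) :
    ∃ x y : List A, w = x ++ τ.map Prod.snd ++ y ∧
      τ = posWord l (n + x.length) (τ.map Prod.snd) := by
  obtain ⟨s, t, hst⟩ := h
  have hlen : s.length + (τ.length + t.length) = w.length := by
    have := congrArg List.length hst
    simpa [pw_length] using this
  set k := s.length with hk
  set x := w.take k with hx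
  have hxlen : x.length = k := by
    rw [hx, List.length_take]; omega
  have hsplit1 : posWord l n w = posWord l n x ++ posWord l (n + k) (w.drop k) := by
    conv_lhs => rw [← List.take_append_drop k w]
    rw [pw_append, hxlen]
  have h1 : s ++ (τ ++ t) = posWord l n x ++ posWord l (n + k) (w.drop k) := by
    rw [← hsplit1, ← hst]; simp
  have hls : s.length = (posWord l n x).length := by rw [pw_length, hxlen]
  obtain ⟨hs, hrest⟩ := List.append_inj h1 hls
  set u1 := (w.drop k).take τ.length with hu1
  have hu1len : u1.length = τ.length := by
    rw [hu1, List.length_take, List.length_drop]; omega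
  have hsplit2 : posWord l (n + k) (w.drop k) =
      posWord l (n + k) u1 ++ posWord l (n + k + τ.length) ((w.drop k).drop τ.length) := by
    conv_lhs => rw [← List.take_append_drop τ.length (w.drop k)]
    rw [pw_append, hu1len]
  rw [hsplit2] at hrest
  have hlτ : τ.length = (posWord l (n+k) u1).length := by rw [pw_length, hu1len]
  obtain ⟨hτ, -⟩ := List.append_inj hrest hlτ
  have hsndτ : τ.map Prod.snd = u1 := by rw [hτ, pw_snd]
  refine ⟨x, (w.drop k).drop τ.length, ?_, ?_⟩
  · rw [hsndτ, hu1]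
    conv_lhs => rw [← List.take_append_drop k w]
    rw [List.append_assoc, ← hx]
    congr 1
    exact (List.take_append_drop τ.length (w.drop k)).symm
  · rw [hsndτ, hxlen]
    exact hτ


/-! ### phase function -/

section Phase

variable (M : NFA' Q A) (l : ℕ)

noncomputable def phi (hsc : M.StronglyConnected) (q : Q) : ZMod l :=
  (((hsc M.init q).choose.length : ℕ) : ZMod l)

variable {M l}

theorem cycle_zero (hper : M.IsPeriod l) {q : Q} {c : List A} (h : M.Run q c q) :
    ((c.length : ℕ) : ZMod l) = 0 := by
  rcases eq_or_ne c [] with rfl | hc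
  · simp
  · exact (ZMod.natCast_eq_zero_iff _ _).mpr (hper.2.1 q c hc h)

theorem phase (hsc : M.StronglyConnected) (hper : M.IsPeriod l) {q q' : Q} {w : List A}
    (h : M.Run q w q') :
    phi M l hsc q + ((w.length : ℕ) : ZMod l) = phi M l hsc q' := by
  set w1 := (hsc M.init q).choose with hw1def
  have hw1 : M.Run M.init w1 q := (hsc M.init q).choose_spec
  set w2 := (hsc M.init q').choose with hw2def
  have hw2 : M.Run M.init w2 q' := (hsc M.init q').choose_spec
  obtain ⟨w3, hw3⟩ := hsc q' M.init
  have hbig : M.Run M.init ((w1 ++ w) ++ w3) M.init :=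
    (run_append M _ _).mpr ⟨q', (run_append M _ _).mpr ⟨q, hw1, h⟩, hw3⟩
  have hbig2 : M.Run M.init (w2 ++ w3) M.init :=
    (run_append M _ _).mpr ⟨q', hw2, hw3⟩
  have h1 : ((w1.length : ℕ) : ZMod l) + ((w.length : ℕ) : ZMod l)
      + ((w3.length : ℕ) : ZMod l) = 0 := by
    have := cycle_zero hper hbig
    push_cast [List.length_append] at this
    linear_combination this
  have h2 : ((w2.length : ℕ) : ZMod l) + ((w3.length : ℕ) : ZMod l) = 0 := by
    have := cycle_zero hper hbig2
    push_cast [List.length_append] at this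
    linear_combination this
  show ((w1.length : ℕ) : ZMod l) + ((w.length : ℕ) : ZMod l) = ((w2.length : ℕ) : ZMod l)
  linear_combination h1 - h2

theorem phi_init (hsc : M.StronglyConnected) (hper : M.IsPeriod l) :
    phi M l hsc M.init = 0 := by
  show (((hsc M.init M.init).choose.length : ℕ) : ZMod l) = 0
  exact cycle_zero hper (hsc M.init M.init).choose_spec

theorem exists_cycle (hper : M.IsPeriod l) : ∃ (q : Q) (c : List A), c ≠ [] ∧ M.Run q c q := by
  by_contra hno
  push_neg at hno
  have : (0 : ℕ) ∣ l := hper.2.2 0 (fun q w hw hrun => absurd hrun (hno q w hw))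
  have := Nat.eq_zero_of_zero_dvd this
  exact absurd this hper.1.ne'

theorem phi_surj (hsc : M.StronglyConnected) (hper : M.IsPeriod l) (j : ZMod l) :
    ∃ q, phi M l hsc q = j := by
  have hl : 0 < l := hper.1
  haveI : NeZero l := ⟨hl.ne'⟩
  obtain ⟨q0, c, hc, hcyc⟩ := exists_cycle hper
  obtain ⟨w1, hw1⟩ := hsc M.init q0
  obtain ⟨w2, hw2⟩ := hsc q0 M.init
  set big := (w1 ++ c) ++ w2 with hbigdef
  have hbigrun : M.Run M.init big M.init :=
    (run_append M _ _).mpr ⟨q0, (run_append M _ _).mpr ⟨q0, hw1, hcyc⟩, hw2⟩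
  have hbigne : big ≠ [] := by
    intro h
    rw [hbigdef] at h
    have := congrArg List.length h
    simp [List.length_append] at this
    exact hc this.2.1
  have hdvd : l ∣ big.length := hper.2.1 _ _ hbigne hbigrun
  have hbigpos : 0 < big.length := List.length_pos_iff.mpr hbigne
  have hle : l ≤ big.length := Nat.le_of_dvd hbigpos hdvd
  have hlt : j.val < big.length := lt_of_lt_of_le (ZMod.val_lt j) hle
  obtain ⟨s, hs, -⟩ := (run_append M (big.take j.val) (big.drop j.val)).mp
    (by rw [List.take_append_drop]; exact hbigrun)
  refine ⟨s, ?_⟩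
  have := phase hsc hper hs
  rw [phi_init hsc hper] at this
  rw [← this]
  rw [List.length_take, min_eq_left hlt.le]
  simp [ZMod.natCast_val, ZMod.cast_id]

end Phase



/-! ### blocking characterizations -/

section Blocking

variable {M : NFA' Q A} {l : ℕ}

theorem blocking_of_infix {μ ν : List (ZMod l × A)} (h : μ <:+: ν) (hν : IsPosWord l ν)
    (hb : M.Blocking l μ) : M.Blocking l ν :=
  ⟨hν, fun ρ hρ hinf => hb.2 ρ hρ (h.trans hinf)⟩

theorem blocking_iff_mortal (hsc : M.StronglyConnected) (hper : M.IsPeriod l)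
    (hF : M.final.Nonempty) (n : ℕ) {u : List A} (hu : u ≠ []) :
    M.Blocking l (posWord l n u) ↔
      ∀ q q', phi M l hsc q = ((n : ℕ) : ZMod l) → ¬ M.Run q u q' := by
  constructor
  · intro hb q q' hq hrun
    obtain ⟨f, hfin⟩ := hF
    obtain ⟨x, hx⟩ := hsc M.init q
    obtain ⟨y, hy⟩ := hsc q' f
    have hw : M.Run M.init ((x ++ u) ++ y) f :=
      (run_append M _ _).mpr ⟨q', (run_append M _ _).mpr ⟨q, hx, hrun⟩, hy⟩
    have hμ : posWord l 0 (x ++ u ++ y) ∈ M.posLang l := ⟨x ++ u ++ y, ⟨f, hfin, hw⟩, rfl⟩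
    have hcast : (((0 + x.length : ℕ)) : ZMod l) = ((n : ℕ) : ZMod l) := by
      have hph := phase hsc hper hx
      rw [phi_init hsc hper] at hph
      rw [hq] at hph
      push_cast
      push_cast at hph
      linear_combination hph
    have hinf : posWord l (0 + x.length) u <:+: posWord l 0 (x ++ u ++ y) := pw_infix 0 x u y
    rw [pw_congr hcast] at hinf
    exact hb.2 _ ⟨0, x ++ u ++ y, rfl⟩ hinf hμ
  · intro hm
    refine ⟨⟨n, u, rfl⟩, ?_⟩
    intro μ hμpos hinf hμlang
    obtain ⟨w, hwlang, rfl⟩ := hμlang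
    obtain ⟨x, y, hw, hτ⟩ := infix_pw_decomp hinf
    rw [pw_snd] at hw hτ
    obtain ⟨f, hfin, hrun⟩ := hwlang
    rw [hw] at hrun
    obtain ⟨s1, hrun1, hrun2⟩ := (run_append M (x ++ u) y).mp hrun
    obtain ⟨q, hx, hu'⟩ := (run_append M x u).mp hrun1
    have hcast := pw_inj_pos hu hτ
    have hq : phi M l hsc q = ((n : ℕ) : ZMod l) := by
      have hph := phase hsc hper hx
      rw [phi_init hsc hper] at hph
      rw [← hph, hcast]
      push_cast
      ring
    exact hm q s1 hq hu'

theorem not_blocking_iff_alive (hsc : M.StronglyConnected) (hper : M.IsPeriod l)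
    (hF : M.final.Nonempty) (n : ℕ) (v : List A) :
    ¬ M.Blocking l (posWord l n v) ↔
      ∃ q q', phi M l hsc q = ((n : ℕ) : ZMod l) ∧ M.Run q v q' := by
  rcases eq_or_ne v [] with rfl | hv
  · have hnb : ¬ M.Blocking l (posWord l n ([] : List A)) := by
      intro hb
      obtain ⟨f, hfin⟩ := hF
      obtain ⟨x, hx⟩ := hsc M.init f
      exact hb.2 (posWord l 0 x) ⟨0, x, rfl⟩ (by rw [pw_nil]; exact List.nil_infix)
        ⟨x, ⟨f, hfin, hx⟩, rfl⟩
    obtain ⟨q, hq⟩ := phi_surj hsc hper ((n : ℕ) : ZMod l)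
    exact iff_of_true hnb ⟨q, q, hq, NFA'.Run.nil q⟩
  · rw [blocking_iff_mortal hsc hper hF n hv]
    push_neg
    rfl

theorem minBlocking_iff (hsc : M.StronglyConnected) (hper : M.IsPeriod l)
    (hF : M.final.Nonempty) (i : ZMod l) {u : List A} (hu : u ≠ []) :
    M.MinBlocking l (posWord l i.val u) ↔
      ((∀ q q', phi M l hsc q = i → ¬ M.Run q u q') ∧
       (∃ q q', phi M l hsc q = i ∧ M.Run q u.dropLast q') ∧
       (∃ q q', phi M l hsc q = i + 1 ∧ M.Run q u.tail q')) := by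
  haveI : NeZero l := ⟨hper.1.ne'⟩
  have hval : ((i.val : ℕ) : ZMod l) = i := by simp [ZMod.natCast_val, ZMod.cast_id]
  have hval1 : (((i.val + 1 : ℕ)) : ZMod l) = i + 1 := by push_cast [hval]; ring
  set τ := posWord l i.val u with hτdef
  have hτne : τ ≠ [] := fun h => hu (pw_eq_nil_iff.mp h)
  have hτlen : 0 < τ.length := List.length_pos_iff.mpr hτne
  constructor
  · rintro ⟨hb, hmin⟩
    refine ⟨?_, ?_, ?_⟩
    · have := (blocking_iff_mortal hsc hper hF i.val hu).mp hb
      rwa [hval] at this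
    · have hd := hmin τ.dropLast ((List.dropLast_prefix τ).isInfix)
        (fun he => by
          have := congrArg List.length he
          rw [List.length_dropLast] at this
          omega)
      rw [hτdef, pw_dropLast] at hd
      have := (not_blocking_iff_alive hsc hper hF i.val u.dropLast).mp hd
      rwa [hval] at this
    · have ht := hmin τ.tail ((List.tail_suffix τ).isInfix)
        (fun he => by
          have := congrArg List.length he
          rw [List.length_tail] at this
          omega)
      rw [hτdef, pw_tail] at ht
      have := (not_blocking_iff_alive hsc hper hF (i.val + 1) u.tail).mp ht
      rwa [hval1] at this
  · rintro ⟨hm, hd, ht⟩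
    have hnbd : ¬ M.Blocking l τ.dropLast := by
      rw [hτdef, pw_dropLast]
      exact (not_blocking_iff_alive hsc hper hF i.val u.dropLast).mpr (by rwa [hval])
    have hnbt : ¬ M.Blocking l τ.tail := by
      rw [hτdef, pw_tail]
      exact (not_blocking_iff_alive hsc hper hF (i.val + 1) u.tail).mpr (by rwa [hval1])
    constructor
    · exact (blocking_iff_mortal hsc hper hF i.val hu).mpr (by rwa [hval])
    · intro μ hinf hne hbμ
      obtain ⟨s, t, hst⟩ := hinf
      rcases eq_or_ne t [] with rfl | hte
      · have hs : s ≠ [] := by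
          rintro rfl
          simp at hst
          exact hne hst
        obtain ⟨b, s', rfl⟩ := List.exists_cons_of_ne_nil hs
        have htail : τ.tail = s' ++ μ ++ [] := by
          rw [← hst]; simp
        have hμinf : μ <:+: τ.tail := ⟨s', [], htail.symm⟩
        exact hnbt (blocking_of_infix hμinf
          ⟨i.val + 1, u.tail, by rw [hτdef, pw_tail]⟩ hbμ)
      · have hdl : τ.dropLast = (s ++ μ) ++ t.dropLast := by
          rw [← hst]
          exact List.dropLast_append_of_ne_nil hte
        have hμinf : μ <:+: τ.dropLast := ⟨s, t.dropLast, by rw [hdl, List.append_assoc]⟩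
        exact hnbd (blocking_of_infix hμinf
          ⟨i.val, u.dropLast, by rw [hτdef, pw_dropLast]⟩ hbμ)

end Blocking


/-! ### the NFA -/

section TheNFA

open Classical

variable (M : NFA' Q A) (l : ℕ)

noncomputable def img (S : Q → Bool) (a : A) : Q → Bool :=
  fun q' => decide (∃ q, S q = true ∧ q' ∈ M.step q a)

theorem img_iff {S : Q → Bool} {a : A} {q' : Q} :
    img M S a q' = true ↔ ∃ q, S q = true ∧ q' ∈ M.step q a := by
  simp [img]

noncomputable def theNFA (hsc : M.StronglyConnected) (i : ZMod l) :
    NFA' ((Q → Bool) × Option Q) (ZMod l × A) where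
  step := fun p x =>
    {p' | (∃ q, p.1 q = true) ∧ (∀ q, p.1 q = true → phi M l hsc q = x.1) ∧
      p'.1 = img M p.1 x.2 ∧
      (match p.2 with
       | none => ∃ t1, p'.2 = some t1 ∧ phi M l hsc t1 = x.1 + 1
       | some t0 => ∃ t1, p'.2 = some t1 ∧ t1 ∈ M.step t0 x.2)}
  init := (fun q => decide (phi M l hsc q = i), none)
  final := {p | p.1 = (fun _ => false) ∧ ∃ t, p.2 = some t}

def tcond (hsc : M.StronglyConnected) (topt : Option Q) (n : ℕ) (u : List A) : Prop :=
  match topt with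
  | some t0 => ∃ t', M.Run t0 u t'
  | none => ∃ t0 t', phi M l hsc t0 = (((n + 1 : ℕ)) : ZMod l) ∧ M.Run t0 u.tail t'

variable {M l}

theorem main_run_iff (hsc : M.StronglyConnected) (hper : M.IsPeriod l) (i : ZMod l) :
    ∀ (w : List (ZMod l × A)) (n : ℕ) (S : Q → Bool) (topt : Option Q),
      (∃ q, S q = true) → (∀ q, S q = true → phi M l hsc q = ((n : ℕ) : ZMod l)) →
      ((∃ p ∈ (theNFA M l hsc i).final, (theNFA M l hsc i).Run (S, topt) w p) ↔
        (∃ u : List A, w = posWord l n u ∧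
          (∀ q q', S q = true → ¬ M.Run q u q') ∧
          (∃ q q', S q = true ∧ M.Run q u.dropLast q') ∧
          tcond M l hsc topt n u)) := by
  intro w
  induction w with
  | nil =>
    intro n S topt hne hhom
    constructor
    · rintro ⟨p, hpf, hrun⟩
      have hp := (run_nil_iff (theNFA M l hsc i)).mp hrun
      rw [← hp] at hpf
      obtain ⟨q, hq⟩ := hne
      have : S = fun _ => false := hpf.1
      rw [this] at hq
      simp at hq
    · rintro ⟨u, hw, hmort, -, -⟩
      have hu : u = [] := pw_eq_nil_iff.mp hw.symm
      subst hu
      obtain ⟨q, hq⟩ := hne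
      exact absurd (NFA'.Run.nil q) (hmort q q hq)
  | cons x w ih =>
    intro n S topt hne hhom
    obtain ⟨j, a⟩ := x
    by_cases hj : ((n : ℕ) : ZMod l) = j
    case neg =>
      constructor
      · rintro ⟨p, hpf, hrun⟩
        rw [run_cons_iff] at hrun
        obtain ⟨p', hstep, -⟩ := hrun
        simp only [theNFA, Set.mem_setOf_eq] at hstep
        obtain ⟨q0, hq0⟩ := hne
        exact absurd ((hhom q0 hq0).symm.trans (hstep.2.1 q0 hq0)) hj
      · rintro ⟨u, hw, -, -, -⟩
        cases u with
        | nil => exact absurd hw (by simp [pw_nil])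
        | cons b u'' =>
          rw [pw_cons] at hw
          rw [List.cons_eq_cons] at hw
          exact absurd (congrArg Prod.fst hw.1).symm hj
    case pos =>
      subst hj
      -- homogeneity of the image
      have hom' : ∀ q1, img M S a q1 = true →
          phi M l hsc q1 = (((n + 1 : ℕ)) : ZMod l) := by
        intro q1 hq1
        obtain ⟨q, hq, hstep⟩ := (img_iff M).mp hq1
        have hph := phase hsc hper ((run_singleton M).mpr hstep)
        rw [hhom q hq] at hph
        rw [← hph]
        push_cast
        simp
      -- membership in the step relation from (S, topt)
      have hstepmem : ∀ (p' : (Q → Bool) × Option Q),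
          p' ∈ (theNFA M l hsc i).step (S, topt) (((n : ℕ) : ZMod l), a) ↔
          (p'.1 = img M S a ∧
            (match topt with
             | none => ∃ t1, p'.2 = some t1 ∧ phi M l hsc t1 = ((n : ℕ) : ZMod l) + 1
             | some t0 => ∃ t1, p'.2 = some t1 ∧ t1 ∈ M.step t0 a)) := by
        intro p'
        simp only [theNFA, Set.mem_setOf_eq]
        constructor
        · rintro ⟨-, -, h3, h4⟩; exact ⟨h3, h4⟩
        · rintro ⟨h3, h4⟩; exact ⟨hne, hhom, h3, h4⟩
      constructor
      · -- LHS → RHS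
        rintro ⟨p, hpf, hrun⟩
        rw [run_cons_iff] at hrun
        obtain ⟨p', hstep, hrun'⟩ := hrun
        rw [hstepmem p'] at hstep
        obtain ⟨hS', ht⟩ := hstep
        obtain ⟨S', t'⟩ := p'
        simp only at hS' ht
        subst hS'
        -- extract t1
        have hT : ∃ t1, t' = some t1 ∧
            (match topt with
             | none => phi M l hsc t1 = ((n : ℕ) : ZMod l) + 1
             | some t0 => t1 ∈ M.step t0 a) := by
          cases topt with
          | none => obtain ⟨t1, h1, h2⟩ := ht; exact ⟨t1, h1, h2⟩
          | some t0 => obtain ⟨t1, h1, h2⟩ := ht; exact ⟨t1, h1, h2⟩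
        obtain ⟨t1, rfl, hC⟩ := hT
        by_cases himg : ∃ q1, img M S a q1 = true
        · obtain ⟨u'', hw, hmortimg, haliveimg, htc⟩ :=
            (ih (n + 1) (img M S a) (some t1) himg hom').mp ⟨p, hpf, hrun'⟩
          obtain ⟨tf, htf⟩ : ∃ tf, M.Run t1 u'' tf := htc
          refine ⟨a :: u'', ?_, ?_, ?_, ?_⟩
          · rw [pw_cons, hw]
          · intro q q' hq hrunq
            rw [run_cons_iff] at hrunq
            obtain ⟨q1, hq1, hrunq'⟩ := hrunq
            exact hmortimg q1 q' ((img_iff M).mpr ⟨q, hq, hq1⟩) hrunq'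
          · rcases eq_or_ne u'' [] with rfl | hu''
            · obtain ⟨q0, hq0⟩ := hne
              exact ⟨q0, q0, hq0, by rw [List.dropLast_singleton]; exact NFA'.Run.nil q0⟩
            · rw [List.dropLast_cons_of_ne_nil hu'']
              obtain ⟨q1, q', hq1, hrund⟩ := haliveimg
              obtain ⟨q, hq, hst⟩ := (img_iff M).mp hq1
              exact ⟨q, q', hq, NFA'.Run.cons hst hrund⟩
          · cases topt with
            | some t0 => exact ⟨tf, NFA'.Run.cons hC htf⟩
            | none =>
              refine ⟨t1, tf, ?_, by rw [List.tail_cons]; exact htf⟩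
              rw [hC]; push_cast; ring
        · -- image empty: w must be []
          cases w with
          | cons x' w'' =>
            exfalso
            rw [run_cons_iff] at hrun'
            obtain ⟨p'', hstep'', -⟩ := hrun'
            simp only [theNFA, Set.mem_setOf_eq] at hstep''
            exact himg hstep''.1
          | nil =>
            have hp := (run_nil_iff (theNFA M l hsc i)).mp hrun'
            refine ⟨[a], by rw [pw_cons, pw_nil], ?_, ?_, ?_⟩
            · intro q q' hq hrunq
              rw [run_singleton] at hrunq
              exact himg ⟨q', (img_iff M).mpr ⟨q, hq, hrunq⟩⟩
            · obtain ⟨q0, hq0⟩ := hne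
              exact ⟨q0, q0, hq0, by rw [List.dropLast_singleton]; exact NFA'.Run.nil q0⟩
            · cases topt with
              | some t0 => exact ⟨t1, (run_singleton M).mpr hC⟩
              | none =>
                refine ⟨t1, t1, ?_, by rw [List.tail_cons]; exact NFA'.Run.nil t1⟩
                rw [hC]; push_cast; ring
      · -- RHS → LHS
        rintro ⟨u, hw, hmort, halive, htc⟩
        cases u with
        | nil => exact absurd hw (by simp [pw_nil])
        | cons b u'' =>
          rw [pw_cons, List.cons_eq_cons] at hw
          obtain ⟨hhead, hwrest⟩ := hw
          have hab : a = b := congrArg Prod.snd hhead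
          subst hab
          -- extract t1 and its property
          have hT : ∃ t1, (match topt with
              | none => phi M l hsc t1 = ((n : ℕ) : ZMod l) + 1
              | some t0 => t1 ∈ M.step t0 a) ∧ ∃ t', M.Run t1 u'' t' := by
            cases topt with
            | some t0 =>
              obtain ⟨t', htc⟩ := htc
              rw [run_cons_iff] at htc
              obtain ⟨t1, h1, h2⟩ := htc
              exact ⟨t1, h1, t', h2⟩
            | none =>
              obtain ⟨t0, t', hφ, htc⟩ := htc
              rw [List.tail_cons] at htc
              refine ⟨t0, ?_, t', htc⟩
              rw [hφ]; push_cast; ring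
          obtain ⟨t1, hC, tf, htf⟩ := hT
          have hstep1 : (img M S a, some t1) ∈
              (theNFA M l hsc i).step (S, topt) (((n : ℕ) : ZMod l), a) := by
            rw [hstepmem (img M S a, some t1)]
            refine ⟨rfl, ?_⟩
            cases topt with
            | none => exact ⟨t1, rfl, hC⟩
            | some t0 => exact ⟨t1, rfl, hC⟩
          by_cases himg : ∃ q1, img M S a q1 = true
          · have haliveimg : ∃ q1 q', img M S a q1 = true ∧ M.Run q1 u''.dropLast q' := by
              rcases eq_or_ne u'' [] with rfl | hu''
              · obtain ⟨q1, hq1⟩ := himg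
                exact ⟨q1, q1, hq1, NFA'.Run.nil q1⟩
              · rw [List.dropLast_cons_of_ne_nil hu''] at halive
                obtain ⟨q, q', hq, hrund⟩ := halive
                rw [run_cons_iff] at hrund
                obtain ⟨q1, hq1, hrund'⟩ := hrund
                exact ⟨q1, q', (img_iff M).mpr ⟨q, hq, hq1⟩, hrund'⟩
            have hmortimg : ∀ q1 q', img M S a q1 = true → ¬ M.Run q1 u'' q' := by
              intro q1 q' hq1 hrunq
              obtain ⟨q, hq, hst⟩ := (img_iff M).mp hq1
              exact hmort q q' hq (NFA'.Run.cons hst hrunq)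
            obtain ⟨p, hpf, hrunw⟩ := (ih (n + 1) (img M S a) (some t1) himg hom').mpr
              ⟨u'', hwrest, hmortimg, haliveimg, ⟨tf, htf⟩⟩
            exact ⟨p, hpf, NFA'.Run.cons hstep1 hrunw⟩
          · -- image empty: u'' must be []
            have hu'' : u'' = [] := by
              by_contra hu''
              rw [List.dropLast_cons_of_ne_nil hu''] at halive
              obtain ⟨q, q', hq, hrund⟩ := halive
              rw [run_cons_iff] at hrund
              obtain ⟨q1, hq1, -⟩ := hrund
              exact himg ⟨q1, (img_iff M).mpr ⟨q, hq, hq1⟩⟩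
            subst hu''
            rw [pw_nil] at hwrest
            subst hwrest
            refine ⟨(img M S a, some t1), ⟨?_, t1, rfl⟩,
              NFA'.Run.cons hstep1 (NFA'.Run.nil _)⟩
            funext q1
            exact Bool.eq_false_iff.mpr (fun h => himg ⟨q1, h⟩)

end TheNFA


/-! ### language of the NFA -/

section Lang

variable {M : NFA' Q A} {l : ℕ}

theorem theNFA_lang (hsc : M.StronglyConnected) (hper : M.IsPeriod l) (i : ZMod l) :
    (theNFA M l hsc i).lang = {τ | ∃ u : List A, u ≠ [] ∧ τ = posWord l i.val u ∧
      (∀ q q', phi M l hsc q = i → ¬ M.Run q u q') ∧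
      (∃ q q', phi M l hsc q = i ∧ M.Run q u.dropLast q') ∧
      (∃ q q', phi M l hsc q = i + 1 ∧ M.Run q u.tail q')} := by
  haveI : NeZero l := ⟨hper.1.ne'⟩
  have hval : ((i.val : ℕ) : ZMod l) = i := by simp [ZMod.natCast_val, ZMod.cast_id]
  ext τ
  simp only [NFA'.lang, Set.mem_setOf_eq]
  have hne : ∃ q, (fun q => decide (phi M l hsc q = i)) q = true := by
    obtain ⟨q, hq⟩ := phi_surj hsc hper i
    exact ⟨q, decide_eq_true hq⟩
  have hhom : ∀ q, (fun q => decide (phi M l hsc q = i)) q = true →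
      phi M l hsc q = ((i.val : ℕ) : ZMod l) := by
    intro q hq
    rw [hval]
    exact of_decide_eq_true hq
  have hmain := main_run_iff hsc hper i τ i.val
    (fun q => decide (phi M l hsc q = i)) none hne hhom
  constructor
  · intro h
    obtain ⟨u, hτ, hm, hal, htc⟩ := hmain.mp h
    have hu : u ≠ [] := by
      rintro rfl
      obtain ⟨q, hq⟩ := hne
      exact hm q q hq (NFA'.Run.nil q)
    refine ⟨u, hu, hτ, ?_, ?_, ?_⟩
    · intro q q' hq
      exact hm q q' (decide_eq_true hq)
    · obtain ⟨q, q', hq, hr⟩ := hal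
      exact ⟨q, q', of_decide_eq_true hq, hr⟩
    · obtain ⟨t0, t', hφ, hr⟩ := htc
      refine ⟨t0, t', ?_, hr⟩
      rw [hφ]
      push_cast [hval]
      ring
  · rintro ⟨u, hu, hτ, h1, h2, h3⟩
    refine hmain.mpr ⟨u, hτ, ?_, ?_, ?_⟩
    · intro q q' hq
      exact h1 q q' (of_decide_eq_true hq)
    · obtain ⟨q, q', hq, hr⟩ := h2
      exact ⟨q, q', decide_eq_true hq, hr⟩
    · obtain ⟨t0, t', hφ, hr⟩ := h3
      refine ⟨t0, t', ?_, hr⟩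
      rw [hφ]
      push_cast [hval]
      ring

theorem theNFA_lang_eq_minBlocking (hsc : M.StronglyConnected) (hper : M.IsPeriod l)
    (hF : M.final.Nonempty) (i : ZMod l) :
    (theNFA M l hsc i).lang =
      {τ | M.MinBlocking l τ ∧ ∃ u : List A, u ≠ [] ∧ τ = posWord l i.val u} := by
  rw [theNFA_lang hsc hper i]
  ext τ
  simp only [Set.mem_setOf_eq]
  constructor
  · rintro ⟨u, hu, rfl, h1, h2, h3⟩
    exact ⟨(minBlocking_iff hsc hper hF i hu).mpr ⟨h1, h2, h3⟩, u, hu, rfl⟩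
  · rintro ⟨hmb, u, hu, rfl⟩
    obtain ⟨h1, h2, h3⟩ := (minBlocking_iff hsc hper hF i hu).mp hmb
    exact ⟨u, hu, rfl, h1, h2, h3⟩

end Lang

/-! ### transport to Fin n -/

theorem exists_fin_nfa {σ Γ : Type} [Fintype σ] (N : NFA' σ Γ) :
    ∃ N' : NFA' (Fin (Fintype.card σ)) Γ, N'.lang = N.lang := by
  set e := Fintype.equivFin σ with he
  set N' : NFA' (Fin (Fintype.card σ)) Γ :=
    ⟨fun s a => {s' | e.symm s' ∈ N.step (e.symm s) a}, e N.init,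
      {s | e.symm s ∈ N.final}⟩ with hN'
  have fwd : ∀ q w r, N.Run q w r → N'.Run (e q) w (e r) := by
    intro q w r h
    induction h with
    | nil q => exact NFA'.Run.nil _
    | @cons p q r a w hst _ ih =>
      refine NFA'.Run.cons ?_ ih
      show e.symm (e q) ∈ N.step (e.symm (e p)) a
      simpa using hst
  have bwd : ∀ s w t, N'.Run s w t → N.Run (e.symm s) w (e.symm t) := by
    intro s w t h
    induction h with
    | nil q => exact NFA'.Run.nil _
    | @cons p q r a w hst _ ih => exact NFA'.Run.cons hst ih
  refine ⟨N', ?_⟩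
  ext w
  simp only [NFA'.lang, Set.mem_setOf_eq]
  constructor
  · rintro ⟨t, htf, hrun⟩
    refine ⟨e.symm t, htf, ?_⟩
    have := bwd _ _ _ hrun
    simpa [hN'] using this
  · rintro ⟨q, hq, hrun⟩
    refine ⟨e q, ?_, fwd _ _ _ hrun⟩
    show e.symm (e q) ∈ N.final
    simpa using hq

/-! ### empty final case -/

theorem target_empty {M : NFA' Q A} {l : ℕ} (hF : ¬ M.final.Nonempty) (i : ZMod l) :
    {τ | M.MinBlocking l τ ∧ ∃ u : List A, u ≠ [] ∧ τ = posWord l i.val u} = ∅ := by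
  ext τ
  simp only [Set.mem_setOf_eq, Set.mem_empty_iff_false, iff_false]
  rintro ⟨hmb, u, hu, rfl⟩
  have hτne : posWord l i.val u ≠ [] := fun h => hu (pw_eq_nil_iff.mp h)
  have hbnil : M.Blocking l ([] : List (ZMod l × A)) := by
    refine ⟨⟨0, [], rfl⟩, ?_⟩
    rintro μ - - ⟨v, ⟨f, hf, -⟩, -⟩
    exact hF ⟨f, hf⟩
  exact hmb.2 [] List.nil_infix (fun h => hτne h.symm) hbnil

end Stmt6Aux

-- STATEMENT 6
theorem stmt6 :
    ∃ C : ℕ, ∀ (Q A : Type) [Fintype Q] [Fintype A] (M : NFA' Q A) (l : ℕ),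
      M.StronglyConnected → M.IsPeriod l → ∀ i : ZMod l,
      ∃ (n : ℕ) (N : NFA' (Fin n) (ZMod l × A)),
        n ≤ 2 ^ (C * Fintype.card Q) ∧
        N.lang = {τ | M.MinBlocking l τ ∧ ∃ u : List A, u ≠ [] ∧ τ = posWord l i.val u} := by
  refine ⟨2, ?_⟩
  intro Q A _ _ M l hsc hper i
  haveI : DecidableEq Q := Classical.decEq Q
  by_cases hF : M.final.Nonempty
  · obtain ⟨N', hN'⟩ := Stmt6Aux.exists_fin_nfa (Stmt6Aux.theNFA M l hsc i)
    refine ⟨Fintype.card ((Q → Bool) × Option Q), N', ?_, ?_⟩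
    · rw [Fintype.card_prod, Fintype.card_fun, Fintype.card_bool, Fintype.card_option]
      have h1 : Fintype.card Q + 1 ≤ 2 ^ Fintype.card Q :=
        Nat.succ_le_of_lt Nat.lt_two_pow_self
      calc 2 ^ Fintype.card Q * (Fintype.card Q + 1)
          ≤ 2 ^ Fintype.card Q * 2 ^ Fintype.card Q := Nat.mul_le_mul_left _ h1
        _ = 2 ^ (2 * Fintype.card Q) := by rw [← pow_add, two_mul]
    · rw [hN', Stmt6Aux.theNFA_lang_eq_minBlocking hsc hper hF i]
  · refine ⟨1, ⟨fun _ _ => ∅, 0, ∅⟩, ?_, ?_⟩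
    · exact Nat.one_le_two_pow
    · rw [Stmt6Aux.target_empty hF i]
      ext w
      simp [NFA'.lang]
end

section
/- Let A be a trim NFA, p the lcm of the lengths of its simple cycles, π = P₀ →^{a₁} ⋯ →^{a_ℓ} P_ℓ an SCC-path, i an index with 0 ≤ i ≤ ℓ, Π a finite set of SCC-paths of A, and (σ_{π′})_{π′ ∈ Π} a family of sequences of p-positional words such that le(σ_{π′}, π) < i for every π′ ∈ Π. Then there exists a sequence σ of p-positional words such that le(σ, π) < i, and le(σ_{π′}, π′) ≤ le(σ, π′) for every π′ ∈ Π. -/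
open scoped ENNReal

/-! ### Auxiliary theory -/
local infixl:50 " <+ " => List.Sublist

section Abstract

variable {α : Type} (P : ℕ → α → Prop) (i : ℕ)

open Classical in
/-- The greedy "jump" of one element: least `u ≥ t` that is out of range or not blocked. -/
noncomputable def jmp (e : α) (t : ℕ) : ℕ := sInf {u | t ≤ u ∧ (i < u ∨ ¬ P u e)}

lemma jmp_mem (e : α) (t : ℕ) : jmp P i e t ∈ {u | t ≤ u ∧ (i < u ∨ ¬ P u e)} := by
  apply Nat.sInf_mem
  exact ⟨max t (i + 1), le_max_left _ _, Or.inl (by omega)⟩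

lemma le_jmp (e : α) (t : ℕ) : t ≤ jmp P i e t := (jmp_mem P i e t).1

lemma jmp_le (e : α) {t : ℕ} (h : t ≤ i + 1) : jmp P i e t ≤ i + 1 :=
  Nat.sInf_le ⟨h, Or.inl (by omega)⟩

lemma jmp_blk (e : α) {t u : ℕ} (h1 : t ≤ u) (h2 : u < jmp P i e t) :
    u ≤ i ∧ P u e := by
  have := Nat.notMem_of_lt_sInf h2
  simp only [Set.mem_setOf_eq, not_and, not_or, not_not] at this
  have := this h1
  exact ⟨by omega, this.2⟩

lemma jmp_not_blk (e : α) {t : ℕ} (h : jmp P i e t ≤ i) : ¬ P (jmp P i e t) e := by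
  rcases (jmp_mem P i e t).2 with h' | h'
  · omega
  · exact h'

lemma jmp_idem (e : α) {t u : ℕ} (h1 : t ≤ u) (h2 : u ≤ jmp P i e t) :
    jmp P i e u = jmp P i e t := by
  apply le_antisymm
  · exact Nat.sInf_le ⟨h2, (jmp_mem P i e t).2⟩
  · have hmem := jmp_mem P i e u
    exact Nat.sInf_le ⟨le_trans h1 hmem.1, hmem.2⟩

/-- Greedy composite over a list. -/
noncomputable def Gr (l : List α) (t : ℕ) : ℕ := l.foldl (fun t e => jmp P i e t) t

@[simp] lemma Gr_nil (t : ℕ) : Gr P i [] t = t := rfl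

lemma Gr_cons (e : α) (l : List α) (t : ℕ) :
    Gr P i (e :: l) t = Gr P i l (jmp P i e t) := rfl

lemma Gr_top (l : List α) : Gr P i l (i + 1) = i + 1 := by
  induction l with
  | nil => simp
  | cons e l ih =>
      rw [Gr_cons]
      have : jmp P i e (i + 1) = i + 1 :=
        le_antisymm (jmp_le P i e le_rfl) (le_jmp P i e _)
      rw [this, ih]

/-- An abstract blocking assignment for portals `t..i` forces the greedy composite past `i`. -/
lemma block_imp_Gr (σ : List α) (t : ℕ) (idx : ℕ → ℕ) (ht : t ≤ i + 1)
    (hmono : Monotone idx)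
    (hblk : ∀ j, t ≤ j → j ≤ i → ∃ h : idx j < σ.length, P j (σ.get ⟨idx j, h⟩)) :
    i < Gr P i σ t := by
  induction σ generalizing t idx with
  | nil =>
      rcases Nat.lt_or_ge t (i + 1) with h | h
      · obtain ⟨h0, -⟩ := hblk t le_rfl (by omega)
        simp at h0
      · simp; omega
  | cons e σ' ih =>
      rcases Nat.eq_or_lt_of_le ht with rfl | ht'
      · rw [Gr_top]; omega
      have ht2 : t ≤ i := by omega
      set t' := jmp P i e t with ht'def
      have htle : t' ≤ i + 1 := jmp_le P i e (by omega)
      rcases Nat.lt_or_ge i t' with h | h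
      · -- t' = i + 1
        have : t' = i + 1 := by omega
        rw [Gr_cons, ← ht'def, this, Gr_top]; omega
      · -- t' ≤ i : the element doesn't block portal t'
        have hnb : ¬ P t' e := jmp_not_blk P i e h
        have htt' : t ≤ t' := le_jmp P i e t
        obtain ⟨hlt, hb⟩ := hblk t' htt' h
        have hge1 : 1 ≤ idx t' := by
          rcases Nat.eq_zero_or_pos (idx t') with h0 | h0
          · exfalso
            apply hnb
            have hmk : (⟨idx t', hlt⟩ : Fin (e :: σ').length)
                = ⟨0, Nat.succ_pos _⟩ := Fin.ext h0
            rw [hmk] at hb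
            simpa using hb
          · exact h0
        rw [Gr_cons, ← ht'def]
        apply ih t' (fun j => idx (max j t') - 1) htle
        · intro a b hab
          show idx (max a t') - 1 ≤ idx (max b t') - 1
          have := hmono (max_le_max hab (le_refl t'))
          omega
        · intro j hj1 hj2
          show ∃ h : idx (max j t') - 1 < σ'.length,
            P j (σ'.get ⟨idx (max j t') - 1, h⟩)
          have hmax : max j t' = j := max_eq_left hj1
          have hge1' : 1 ≤ idx j := le_trans hge1 (hmono hj1)
          obtain ⟨hlt', hb'⟩ := hblk j (le_trans htt' hj1) hj2
          rw [hmax]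
          have hlt'' : idx j < σ'.length + 1 := by simpa using hlt'
          have hlen : idx j - 1 < σ'.length := by omega
          refine ⟨hlen, ?_⟩
          have hmk : (⟨idx j, hlt'⟩ : Fin (e :: σ').length)
              = ⟨(idx j - 1) + 1, by simp; omega⟩ :=
            Fin.ext (show idx j = idx j - 1 + 1 by omega)
          rw [hmk] at hb'
          simpa using hb'

/-- Conversely, if the greedy composite passes `i`, a blocking assignment exists. -/
lemma Gr_imp_block (σ : List α) (t : ℕ) (ht : t ≤ i + 1) (h : i < Gr P i σ t) :
    ∃ idx : ℕ → ℕ, Monotone idx ∧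
      ∀ j, t ≤ j → j ≤ i → ∃ h : idx j < σ.length, P j (σ.get ⟨idx j, h⟩) := by
  induction σ generalizing t with
  | nil =>
      refine ⟨fun _ => 0, monotone_const, ?_⟩
      intro j hj1 hj2
      simp at h
      omega
  | cons e σ' ih =>
      set t' := jmp P i e t with ht'def
      have htle : t' ≤ i + 1 := jmp_le P i e ht
      rw [Gr_cons, ← ht'def] at h
      obtain ⟨idx', hmono', hblk'⟩ := ih t' htle h
      refine ⟨fun j => if j < t' then 0 else idx' j + 1, ?_, ?_⟩
      · intro a b hab
        by_cases ha : a < t' <;> by_cases hb : b < t' <;> simp [ha, hb]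
        · omega
        · exact hmono' hab
      · intro j hj1 hj2
        by_cases hcase : j < t'
        · simp only [if_pos hcase]
          obtain ⟨hji, hPj⟩ := jmp_blk P i e hj1 hcase
          exact ⟨by simp, hPj⟩
        · simp only [if_neg hcase]
          obtain ⟨hlt, hb⟩ := hblk' j (by omega) hj2
          refine ⟨by simp; omega, ?_⟩
          simpa using hb

/-- Merge: two lists with controlled greedy composite admit a common supersequence
with controlled greedy composite. -/
lemma merge_exists (a : List α) : ∀ (b : List α) (t : ℕ),
    ∃ s : List α, a <+ s ∧ b <+ s ∧ Gr P i s t ≤ max (Gr P i a t) (Gr P i b t) := by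
  induction a with
  | nil =>
      intro b t
      exact ⟨b, List.nil_sublist b, List.Sublist.refl b, le_max_right _ _⟩
  | cons x a' iha =>
      intro b
      induction b with
      | nil =>
          intro t
          exact ⟨x :: a', List.Sublist.refl _, List.nil_sublist _, le_max_left _ _⟩
      | cons y b' ihb =>
          intro t
          rcases le_total (jmp P i x t) (jmp P i y t) with hxy | hxy
          · -- emit x
            obtain ⟨s', ha', hb', hg⟩ := iha (y :: b') (jmp P i x t)
            refine ⟨x :: s', List.Sublist.cons₂ x ha', List.Sublist.cons x hb', ?_⟩
            rw [Gr_cons]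
            refine le_trans hg ?_
            apply max_le_max (le_of_eq (Gr_cons P i x a' t).symm)
            rw [Gr_cons, Gr_cons]
            rw [jmp_idem P i y (le_jmp P i x t) hxy]
          · -- emit y
            obtain ⟨s', ha', hb', hg⟩ := ihb (jmp P i y t)
            refine ⟨y :: s', List.Sublist.cons y ha', List.Sublist.cons₂ y hb', ?_⟩
            rw [Gr_cons]
            refine le_trans hg (max_le ?_ ?_)
            · have he : Gr P i (x :: a') (jmp P i y t) = Gr P i (x :: a') t := by
                rw [Gr_cons, Gr_cons, jmp_idem P i x (le_jmp P i y t) hxy]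
              rw [he]
              exact le_max_left _ _
            · rw [← Gr_cons]
              exact le_max_right _ _

end Abstract

section Wrappers

variable {Q A : Type} (M : NFA' Q A) {p : ℕ} (P0 : Portal Q p)
  (steps : List (A × Portal Q p))

lemma portalsOf_take_length (m : ℕ) (hm : m ≤ steps.length) :
    (portalsOf P0 (steps.take m)).length = m + 1 := by
  simp [portalsOf]
  omega

lemma portalsOf_take_get (m : ℕ) (hm : m ≤ steps.length)
    (j : Fin (portalsOf P0 (steps.take m)).length)
    (hj' : j.val < (portalsOf P0 steps).length) :
    (portalsOf P0 (steps.take m)).get j = (portalsOf P0 steps).get ⟨j.val, hj'⟩ := by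
  rcases j with ⟨j, hj⟩
  cases j with
  | zero => rfl
  | succ k =>
      simp only [portalsOf, List.get_eq_getElem, List.getElem_cons_succ, List.getElem_map]
      congr 1
      apply List.getElem_take

end Wrappers

/-- The abstract portal-blocking predicate for the full portal list of a path. -/
def AbsP {Q A : Type} (M : NFA' Q A) {p : ℕ} (P0 : Portal Q p)
    (steps : List (A × Portal Q p)) (j : ℕ) (τ : List (ZMod p × A)) : Prop :=
  ∃ h : j < (portalsOf P0 steps).length,
    PortalBlocking M ((portalsOf P0 steps).get ⟨j, h⟩) τ

/-- Abstract reformulation of `BlockingSeqFor` on a prefix. -/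
def AbsBlock {Q A : Type} (M : NFA' Q A) {p : ℕ} (P0 : Portal Q p)
    (steps : List (A × Portal Q p)) (σ : List (List (ZMod p × A))) (m : ℕ) : Prop :=
  ∃ idx : ℕ → ℕ, Monotone idx ∧
    ∀ j, j ≤ m → ∃ h : idx j < σ.length, AbsP M P0 steps j (σ.get ⟨idx j, h⟩)

section Equiv

variable {Q A : Type} (M : NFA' Q A) {p : ℕ} (P0 : Portal Q p)
  (steps : List (A × Portal Q p)) (σ : List (List (ZMod p × A)))

lemma blockingSeqFor_iff_absBlock (m : ℕ) (hm : m ≤ steps.length) :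
    BlockingSeqFor M σ P0 (steps.take m) ↔ AbsBlock M P0 steps σ m := by
  have hlen := portalsOf_take_length P0 steps m hm
  constructor
  · rintro ⟨idx, hmono, hblk⟩
    refine ⟨fun j => (idx ⟨min j m, by omega⟩).val, ?_, ?_⟩
    · intro a b hab
      have h1 : (⟨min a m, by omega⟩ : Fin (portalsOf P0 (steps.take m)).length)
          ≤ ⟨min b m, by omega⟩ := by
        simp only [Fin.mk_le_mk]
        omega
      exact hmono h1
    · intro j hj
      have hjm : min j m = j := min_eq_left hj
      have hjlt : min j m < (portalsOf P0 (steps.take m)).length := by omega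
      have hjlt' : min j m < (portalsOf P0 steps).length := by
        simp only [portalsOf, List.length_cons, List.length_map]
        simp only [portalsOf, List.length_cons, List.length_map, List.length_take] at hlen
        omega
      have hj2 : j < (portalsOf P0 steps).length := hjm ▸ hjlt'
      have hb := hblk ⟨min j m, hjlt⟩
      rw [portalsOf_take_get P0 steps m hm ⟨min j m, hjlt⟩ hjlt'] at hb
      have ecast : (⟨(⟨min j m, hjlt⟩ : Fin (portalsOf P0 (steps.take m)).length).val,
          hjlt'⟩ : Fin (portalsOf P0 steps).length) = ⟨j, hj2⟩ := Fin.ext hjm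
      rw [ecast] at hb
      exact ⟨(idx ⟨min j m, hjlt⟩).isLt, hj2, hb⟩
  · rintro ⟨idx, hmono, hblk⟩
    have key : ∀ j : Fin (portalsOf P0 (steps.take m)).length,
        ∃ h : idx j.val < σ.length,
          PortalBlocking M ((portalsOf P0 (steps.take m)).get j)
            (σ.get ⟨idx j.val, h⟩) := by
      intro j
      obtain ⟨h1, h2, h3⟩ := hblk j.val (by have := j.isLt; omega)
      refine ⟨h1, ?_⟩
      rw [portalsOf_take_get P0 steps m hm j h2]
      exact h3
    refine ⟨fun j => ⟨idx j.val, (key j).choose⟩, ?_, fun j => (key j).choose_spec⟩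
    intro a b hab
    exact Fin.mk_le_mk.mpr (hmono hab)

lemma absBlock_antitone {m m' : ℕ} (hmm : m ≤ m') (h : AbsBlock M P0 steps σ m') :
    AbsBlock M P0 steps σ m := by
  obtain ⟨idx, hmono, hblk⟩ := h
  exact ⟨idx, hmono, fun j hj => hblk j (le_trans hj hmm)⟩

lemma leftEffect_lt_iff {i : ℕ} (hi : i ≤ steps.length) :
    leftEffect M σ P0 steps < (i : ℤ) ↔ ¬ AbsBlock M P0 steps σ i := by
  set S := {j : ℕ | ∃ i' : ℕ, j = i' + 1 ∧ i' ≤ steps.length ∧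
    BlockingSeqFor M σ P0 (steps.take i')} with hS
  have hbdd : BddAbove S := by
    refine ⟨steps.length + 1, ?_⟩
    rintro j ⟨i', rfl, h, -⟩
    omega
  have hle : leftEffect M σ P0 steps = ((sSup S : ℕ) : ℤ) - 1 := rfl
  constructor
  · intro h hab
    have hmem : i + 1 ∈ S :=
      ⟨i, rfl, hi, (blockingSeqFor_iff_absBlock M P0 steps σ i hi).mpr hab⟩
    have h1 : (i + 1 : ℕ) ≤ sSup S := le_csSup hbdd hmem
    rw [hle] at h
    have h2 : ((sSup S : ℕ) : ℤ) < (i : ℤ) + 1 := by omega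
    have h3 : sSup S < i + 1 := by exact_mod_cast h2
    omega
  · intro h
    have hsup : sSup S ≤ i := by
      rcases Set.eq_empty_or_nonempty S with he | hne
      · rw [he]
        simp
      · apply csSup_le hne
        rintro j ⟨i', rfl, hi', hbl⟩
        have habs' : AbsBlock M P0 steps σ i' :=
          (blockingSeqFor_iff_absBlock M P0 steps σ i' hi').mp hbl
        by_contra hc
        push_neg at hc
        exact h (absBlock_antitone M P0 steps σ (by omega) habs')
    rw [hle]
    have : ((sSup S : ℕ) : ℤ) ≤ (i : ℤ) := by exact_mod_cast hsup
    omega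

end Equiv

section SublistMono

variable {Q A : Type} (M : NFA' Q A) {p : ℕ}

lemma blockingSeqFor_sublist {σ' σ : List (List (ZMod p × A))} (hs : σ' <+ σ)
    (X : Portal Q p) (Y : List (A × Portal Q p)) :
    BlockingSeqFor M σ' X Y → BlockingSeqFor M σ X Y := by
  rintro ⟨idx, hmono, hblk⟩
  obtain ⟨f, hf⟩ := List.sublist_iff_exists_fin_orderEmbedding_get_eq.mp hs
  refine ⟨fun j => f (idx j), fun a b hab => f.monotone (hmono hab), fun j => ?_⟩
  rw [← hf (idx j)]
  exact hblk j

lemma leftEffect_sublist_mono {σ' σ : List (List (ZMod p × A))} (hs : σ' <+ σ)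
    (X : Portal Q p) (Y : List (A × Portal Q p)) :
    leftEffect M σ' X Y ≤ leftEffect M σ X Y := by
  set S' := {j : ℕ | ∃ i' : ℕ, j = i' + 1 ∧ i' ≤ Y.length ∧
    BlockingSeqFor M σ' X (Y.take i')} with hS'
  set S := {j : ℕ | ∃ i' : ℕ, j = i' + 1 ∧ i' ≤ Y.length ∧
    BlockingSeqFor M σ X (Y.take i')} with hS
  have hsub : S' ⊆ S := by
    rintro j ⟨i', rfl, h1, h2⟩
    exact ⟨i', rfl, h1, blockingSeqFor_sublist M hs X (Y.take i') h2⟩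
  have hbdd : BddAbove S := by
    refine ⟨Y.length + 1, ?_⟩
    rintro j ⟨i', rfl, h, -⟩
    omega
  have hsup : sSup S' ≤ sSup S := by
    rcases Set.eq_empty_or_nonempty S' with he | hne
    · rw [he]
      simp
    · exact csSup_le_csSup hbdd hne hsub
  show ((sSup S' : ℕ) : ℤ) - 1 ≤ ((sSup S : ℕ) : ℤ) - 1
  have : ((sSup S' : ℕ) : ℤ) ≤ ((sSup S : ℕ) : ℤ) := by exact_mod_cast hsup
  omega

end SublistMono

-- STATEMENT 19
theorem stmt19 {Q A : Type} [Fintype Q] [Fintype A] (M : NFA' Q A)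
    (htrim : M.Trim) (p : ℕ) (hp : M.IsCycleLcm p)
    (P0 : Portal Q p) (steps : List (A × Portal Q p)) (hπ : IsSCCPath M P0 steps)
    (i : ℕ) (hi : i ≤ steps.length)
    (Paths : List (Portal Q p × List (A × Portal Q p)))
    (hPaths : ∀ π' ∈ Paths, IsSCCPath M π'.1 π'.2)
    (σf : Portal Q p × List (A × Portal Q p) → List (List (ZMod p × A)))
    (hle : ∀ π' ∈ Paths, leftEffect M (σf π') P0 steps < (i : ℤ)) :
    ∃ σ : List (List (ZMod p × A)),
      leftEffect M σ P0 steps < (i : ℤ) ∧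
      ∀ π' ∈ Paths, leftEffect M (σf π') π'.1 π'.2 ≤ leftEffect M σ π'.1 π'.2 := by
  set PP : ℕ → List (ZMod p × A) → Prop := AbsP M P0 steps with hPP
  -- `¬ AbsBlock _ i` is equivalent to `Gr ≤ i`
  have hGr_of : ∀ σ : List (List (ZMod p × A)),
      ¬ AbsBlock M P0 steps σ i → Gr PP i σ 0 ≤ i := by
    intro σ h
    by_contra hc
    push_neg at hc
    obtain ⟨idx, hmono, hblk⟩ := Gr_imp_block PP i σ 0 (by omega) hc
    exact h ⟨idx, hmono, fun j hj => hblk j (Nat.zero_le j) hj⟩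
  have hof_Gr : ∀ σ : List (List (ZMod p × A)),
      Gr PP i σ 0 ≤ i → ¬ AbsBlock M P0 steps σ i := by
    intro σ hG hab
    obtain ⟨idx, hmono, hblk⟩ := hab
    have := block_imp_Gr PP i σ 0 idx (by omega) hmono
      (fun j _ hj => hblk j hj)
    omega
  -- merge all the sequences
  have main : ∀ L : List (Portal Q p × List (A × Portal Q p)),
      (∀ π' ∈ L, Gr PP i (σf π') 0 ≤ i) →
      ∃ σ : List (List (ZMod p × A)), Gr PP i σ 0 ≤ i ∧ ∀ π' ∈ L, σf π' <+ σ := by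
    intro L
    induction L with
    | nil => exact fun _ => ⟨[], by simp, by simp⟩
    | cons hd tl ih =>
        intro hAll
        obtain ⟨σ₀, hg0, hsub⟩ := ih (fun π' h => hAll π' (List.mem_cons_of_mem hd h))
        obtain ⟨s, h1, h2, h3⟩ := merge_exists PP i σ₀ (σf hd) 0
        refine ⟨s, ?_, ?_⟩
        · refine le_trans h3 ?_
          exact max_le hg0 (hAll hd List.mem_cons_self)
        · intro π' hπ'
          rcases List.mem_cons.mp hπ' with rfl | hmem
          · exact h2
          · exact (hsub π' hmem).trans h1
  have hGr_all : ∀ π' ∈ Paths, Gr PP i (σf π') 0 ≤ i := by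
    intro π' h
    apply hGr_of
    exact (leftEffect_lt_iff M P0 steps (σf π') hi).mp (hle π' h)
  obtain ⟨σ, hGσ, hsubσ⟩ := main Paths hGr_all
  refine ⟨σ, ?_, ?_⟩
  · exact (leftEffect_lt_iff M P0 steps σ hi).mpr (hof_Gr σ hGσ)
  · intro π' h
    exact leftEffect_sublist_mono M (hsubσ π' h) π'.1 π'.2
end
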